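/- The derivative of the entropic OT loss strictly dominates that of the negative log-likelihood on the negative half-line: if α* > 1/2, then for every θ < 0 and every a ∈ (0,1) with G(θ, a) = α*, one has F(θ, a) > F(θ, α*). (Since 𝓛'(θ) = F(θ, a(θ)) - θ and ℓ'(θ) = F(θ, α*) - θ, this says 𝓛'(θ) > ℓ'(θ) for all θ < 0.) -/

import Mathlib

open MeasureTheory

/-- The standard Gaussian density. -/
noncomputable def stdGauss (y : ℝ) : ℝ :=
  (Real.sqrt (2 * Real.pi))⁻¹ * Real.exp (-y ^ 2 / 2)

/-- Density of the two-component mixture `α*·N(θ*,1) + (1-α*)·N(-θ*,1)`. -/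
noncomputable def mixDen (θs αs y : ℝ) : ℝ :=
  αs * stdGauss (y - θs) + (1 - αs) * stdGauss (y + θs)

/-- The EM/Sinkhorn-EM map `F(θ, α)`. -/
noncomputable def Fmap (θs αs θ α : ℝ) : ℝ :=
  ∫ y, y * (α * Real.exp (θ * y) - (1 - α) * Real.exp (-(θ * y))) /
      (α * Real.exp (θ * y) + (1 - α) * Real.exp (-(θ * y))) * mixDen θs αs y

/-- The tilting equation map `G(θ, α)`. -/
noncomputable def Gmap (θs αs θ α : ℝ) : ℝ :=
  ∫ y, α * Real.exp (θ * y) /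
      (α * Real.exp (θ * y) + (1 - α) * Real.exp (-(θ * y))) * mixDen θs αs y

/-- The (normalized) `θ`-derivative of the tilting equation, `G_θ(θ, α)`. -/
noncomputable def Gtheta (θs αs θ α : ℝ) : ℝ :=
  ∫ y, y / (α * Real.exp (θ * y) + (1 - α) * Real.exp (-(θ * y))) ^ 2 * mixDen θs αs y

/-!
Write `D_α(y) = α e^{θy} + (1 - α) e^{-θy}` and `r_α(y) = α e^{θy} / D_α(y)` (the EM
responsibility), so that `G(θ, α) = ∫ r_α q*` and `F(θ, α) = ∫ y (2 r_α - 1) q*`. Because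
`e^{θy} e^{-θy} = 1`, `r_a - r_b = (a - b) / (D_a D_b)`, hence `G(θ, a) - G(θ, α*)` and
`F(θ, a) - F(θ, α*)` are `(a - α*)` times the integrals of `q* / (D_a D_{α*})` against `1` and
`2y` respectively.

For `θ < 0` and weights above `1/2`, `D_α(y) < D_α(-y)` when `y > 0`, while `q*(-y) < q*(y)`
since `α* > 1/2`; so every weight `q* / D` is heavier at `y` than at `-y`, and integrating an odd
function that is positive on `(0, ∞)` against it gives a positive number. Applied to
`e^{-θy} - e^{θy}` this yields `G(θ, α*) < α*`, so `G(θ, a) = α*` forces `a > α*`; applied to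
`y` it makes the integral in `F(θ, a) - F(θ, α*)` positive.
-/

open Real Set

section Gaussian

lemma stdGauss_pos (y : ℝ) : 0 < stdGauss y := by
  unfold stdGauss; positivity

lemma stdGauss_neg (y : ℝ) : stdGauss (-y) = stdGauss y := by
  simp [stdGauss]

lemma stdGauss_lt_stdGauss {a b : ℝ} (h : a ^ 2 < b ^ 2) : stdGauss b < stdGauss a := by
  unfold stdGauss
  gcongr

lemma stdGauss_sub_eq_gaussianPDFReal (μ y : ℝ) :
    stdGauss (y - μ) = ProbabilityTheory.gaussianPDFReal μ 1 y := by
  simp [stdGauss, ProbabilityTheory.gaussianPDFReal]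

lemma integrable_stdGauss_sub (μ : ℝ) : Integrable fun y => stdGauss (y - μ) := by
  simpa only [stdGauss_sub_eq_gaussianPDFReal] using
    ProbabilityTheory.integrable_gaussianPDFReal μ 1

lemma integral_stdGauss_sub (μ : ℝ) : ∫ y, stdGauss (y - μ) = 1 := by
  simpa only [stdGauss_sub_eq_gaussianPDFReal] using
    ProbabilityTheory.integral_gaussianPDFReal_eq_one μ one_ne_zero

lemma integrable_mul_stdGauss_sub (μ : ℝ) : Integrable fun y => y * stdGauss (y - μ) := by
  have h : Integrable fun y => y * stdGauss y := by
    have := (integrable_mul_exp_neg_mul_sq (b := 1 / 2) (by norm_num)).const_mul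
      (√(2 * π))⁻¹
    refine this.congr (ae_of_all _ fun y => ?_)
    simp only [stdGauss]
    ring_nf
  refine ((h.comp_sub_right μ).add ((integrable_stdGauss_sub μ).const_mul μ)).congr
    (ae_of_all _ fun y => ?_)
  simp only [Pi.add_apply]
  ring

end Gaussian

section Mixture

variable {θs αs : ℝ}

lemma mixDen_nonneg (h0 : 0 ≤ αs) (h1 : αs ≤ 1) (y : ℝ) : 0 ≤ mixDen θs αs y := by
  unfold mixDen
  have := stdGauss_pos (y - θs)
  have := stdGauss_pos (y + θs)
  have : 0 ≤ 1 - αs := by linarith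
  positivity

lemma mixDen_pos (h0 : 0 < αs) (h1 : αs ≤ 1) (y : ℝ) : 0 < mixDen θs αs y := by
  unfold mixDen
  have := stdGauss_pos (y - θs)
  have := stdGauss_pos (y + θs)
  have : 0 ≤ 1 - αs := by linarith
  positivity

lemma mixDen_neg_lt (hθs : 0 < θs) (hαs : 1 / 2 < αs) {y : ℝ} (hy : 0 < y) :
    mixDen θs αs (-y) < mixDen θs αs y := by
  have hlt : stdGauss (y + θs) < stdGauss (y - θs) := stdGauss_lt_stdGauss (by nlinarith)
  have hneg : mixDen θs αs (-y) = αs * stdGauss (y + θs) + (1 - αs) * stdGauss (y - θs) := by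
    rw [mixDen, show -y - θs = -(y + θs) by ring, show -y + θs = -(y - θs) by ring,
      stdGauss_neg, stdGauss_neg]
  rw [hneg, mixDen]
  nlinarith

lemma integrable_mixDen : Integrable (mixDen θs αs) := by
  have h := integrable_stdGauss_sub (-θs)
  simp only [sub_neg_eq_add] at h
  exact ((integrable_stdGauss_sub θs).const_mul αs).add (h.const_mul (1 - αs))

lemma integrable_id_mul_mixDen : Integrable fun y => y * mixDen θs αs y := by
  have h := integrable_mul_stdGauss_sub (-θs)
  simp only [sub_neg_eq_add] at h
  refine (((integrable_mul_stdGauss_sub θs).const_mul αs).add (h.const_mul (1 - αs))).congr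
    (ae_of_all _ fun y => ?_)
  simp only [Pi.add_apply, mixDen]
  ring

lemma integral_mixDen : ∫ y, mixDen θs αs y = 1 := by
  have h := integral_stdGauss_sub (-θs)
  have hi := integrable_stdGauss_sub (-θs)
  simp only [sub_neg_eq_add] at h hi
  unfold mixDen
  rw [integral_add ((integrable_stdGauss_sub θs).const_mul αs) (hi.const_mul (1 - αs)),
    integral_const_mul, integral_const_mul, integral_stdGauss_sub, h]
  ring

end Mixture

lemma integral_eq_setIntegral_Ioi_add_comp_neg {g : ℝ → ℝ} (hg : Integrable g) :
    ∫ y, g y = ∫ y in Ioi 0, (g y + g (-y)) := by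
  rw [integral_add hg.integrableOn hg.comp_neg.integrableOn, integral_comp_neg_Ioi, neg_zero,
    add_comm, intervalIntegral.integral_Iic_add_Ioi hg.integrableOn hg.integrableOn]

lemma integral_pos_of_add_comp_neg_pos {g : ℝ → ℝ} (hg : Integrable g)
    (hpos : ∀ y, 0 < y → 0 < g y + g (-y)) : 0 < ∫ y, g y := by
  rw [integral_eq_setIntegral_Ioi_add_comp_neg hg,
    setIntegral_pos_iff_support_of_nonneg_ae
      ((ae_restrict_iff' measurableSet_Ioi).2 (ae_of_all _ fun y hy => (hpos y hy).le))
      (hg.add hg.comp_neg).integrableOn]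
  have hsub : Ioi (0 : ℝ) ⊆ Function.support (fun y => g y + g (-y)) ∩ Ioi 0 :=
    fun y hy => ⟨(hpos y hy).ne', hy⟩
  exact lt_of_lt_of_le (by simp) (measure_mono hsub)

lemma integral_odd_mul_pos {h w : ℝ → ℝ} (hint : Integrable fun y => h y * w y)
    (hodd : ∀ y, h (-y) = -h y) (hh : ∀ y, 0 < y → 0 < h y)
    (hw : ∀ y, 0 < y → w (-y) < w y) : 0 < ∫ y, h y * w y :=
  integral_pos_of_add_comp_neg_pos hint fun y hy => by
    rw [hodd, neg_mul, ← sub_eq_add_neg, ← mul_sub]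
    exact mul_pos (hh y hy) (sub_pos.2 (hw y hy))

noncomputable def emDenom (θ α y : ℝ) : ℝ :=
  α * exp (θ * y) + (1 - α) * exp (-(θ * y))

noncomputable def resp (θ α y : ℝ) : ℝ :=
  α * exp (θ * y) / emDenom θ α y

section Responsibility

variable {θ α a b : ℝ}

lemma emDenom_pos (h0 : 0 ≤ α) (h1 : α ≤ 1) (y : ℝ) : 0 < emDenom θ α y := by
  unfold emDenom
  rcases h0.eq_or_lt with rfl | h0
  · simp [exp_pos]
  · have : 0 ≤ 1 - α := by linarith
    positivity

@[fun_prop]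
lemma measurable_emDenom : Measurable (emDenom θ α) := by
  unfold emDenom; fun_prop

@[fun_prop]
lemma measurable_resp : Measurable (resp θ α) := by
  unfold resp; fun_prop

lemma mul_one_sub_le_emDenom_mul (ha0 : 0 ≤ a) (ha1 : a ≤ 1) (hb0 : 0 ≤ b) (hb1 : b ≤ 1)
    (y : ℝ) : a * (1 - b) ≤ emDenom θ a y * emDenom θ b y := by
  have hef : exp (θ * y) * exp (-(θ * y)) = 1 := by rw [← exp_add, add_neg_cancel, exp_zero]
  have he := exp_pos (θ * y)
  have hf := exp_pos (-(θ * y))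
  have hab : a * exp (θ * y) * ((1 - b) * exp (-(θ * y))) = a * (1 - b) := by
    linear_combination a * (1 - b) * hef
  rw [← hab]
  unfold emDenom
  gcongr
  · nlinarith
  · nlinarith

lemma emDenom_lt_emDenom_neg (hθ : θ < 0) (hα : 1 / 2 < α) {y : ℝ} (hy : 0 < y) :
    emDenom θ α y < emDenom θ α (-y) := by
  have : exp (θ * y) < exp (-(θ * y)) := exp_lt_exp.2 (by nlinarith)
  simp only [emDenom, mul_neg, neg_neg]
  nlinarith

lemma resp_mem_Icc (h0 : 0 ≤ α) (h1 : α ≤ 1) (y : ℝ) : resp θ α y ∈ Icc 0 1 := by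
  have hD := emDenom_pos (θ := θ) h0 h1 y
  refine ⟨by unfold resp; positivity, ?_⟩
  rw [resp, div_le_one hD, emDenom]
  have : 0 ≤ (1 - α) * exp (-(θ * y)) := mul_nonneg (by linarith) (exp_pos _).le
  linarith

lemma resp_sub_resp (ha0 : 0 ≤ a) (ha1 : a ≤ 1) (hb0 : 0 ≤ b) (hb1 : b ≤ 1) (y : ℝ) :
    resp θ a y - resp θ b y = (a - b) / (emDenom θ a y * emDenom θ b y) := by
  have hef : exp (θ * y) * exp (-(θ * y)) = 1 := by rw [← exp_add, add_neg_cancel, exp_zero]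
  have := (emDenom_pos (θ := θ) ha0 ha1 y).ne'
  have := (emDenom_pos (θ := θ) hb0 hb1 y).ne'
  unfold resp
  field_simp
  unfold emDenom
  linear_combination (a - b) * hef

lemma two_mul_resp_sub_one (h0 : 0 ≤ α) (h1 : α ≤ 1) (y : ℝ) :
    2 * resp θ α y - 1 = (α * exp (θ * y) - (1 - α) * exp (-(θ * y))) / emDenom θ α y := by
  have := (emDenom_pos (θ := θ) h0 h1 y).ne'
  unfold resp
  field_simp
  unfold emDenom
  ring

lemma sub_resp_self (h0 : 0 ≤ α) (h1 : α ≤ 1) (y : ℝ) :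
    α - resp θ α y = α * (1 - α) * ((exp (-(θ * y)) - exp (θ * y)) / emDenom θ α y) := by
  have := (emDenom_pos (θ := θ) h0 h1 y).ne'
  unfold resp
  field_simp
  unfold emDenom
  ring

end Responsibility

section EMMaps

variable {θs αs θ α a b : ℝ}

lemma Gmap_eq_integral_resp : Gmap θs αs θ α = ∫ y, resp θ α y * mixDen θs αs y := rfl

lemma Fmap_eq_integral_resp (h0 : 0 ≤ α) (h1 : α ≤ 1) :
    Fmap θs αs θ α = ∫ y, (2 * resp θ α y - 1) * (y * mixDen θs αs y) := by
  refine integral_congr_ae (ae_of_all _ fun y => ?_)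
  dsimp only
  rw [two_mul_resp_sub_one h0 h1, emDenom]
  ring

lemma integrable_resp_mul_mixDen (h0 : 0 ≤ α) (h1 : α ≤ 1) :
    Integrable fun y => resp θ α y * mixDen θs αs y :=
  integrable_mixDen.bdd_mul (c := 1) (by fun_prop)
    (ae_of_all _ fun y => by
      obtain ⟨hr0, hr1⟩ := resp_mem_Icc (θ := θ) h0 h1 y
      rw [Real.norm_eq_abs, abs_le]; constructor <;> linarith)

lemma integrable_two_mul_resp_sub_one_mul (h0 : 0 ≤ α) (h1 : α ≤ 1) :
    Integrable fun y => (2 * resp θ α y - 1) * (y * mixDen θs αs y) :=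
  integrable_id_mul_mixDen.bdd_mul (c := 1) (by fun_prop)
    (ae_of_all _ fun y => by
      obtain ⟨hr0, hr1⟩ := resp_mem_Icc (θ := θ) h0 h1 y
      rw [Real.norm_eq_abs, abs_le]; constructor <;> linarith)

lemma MeasureTheory.Integrable.div_emDenom_mul {g : ℝ → ℝ} (hg : Integrable g) (ha0 : 0 < a)
    (ha1 : a ≤ 1) (hb0 : 0 ≤ b) (hb1 : b < 1) :
    Integrable fun y => g y / (emDenom θ a y * emDenom θ b y) := by
  have hc : 0 < a * (1 - b) := mul_pos ha0 (by linarith)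
  simp_rw [div_eq_inv_mul]
  refine hg.bdd_mul (c := (a * (1 - b))⁻¹) (by fun_prop) (ae_of_all _ fun y => ?_)
  have hP := mul_pos (emDenom_pos (θ := θ) ha0.le ha1 y) (emDenom_pos (θ := θ) hb0 hb1.le y)
  rw [norm_inv, Real.norm_of_nonneg hP.le]
  exact inv_anti₀ hc (mul_one_sub_le_emDenom_mul ha0.le ha1 hb0 hb1.le y)

lemma Gmap_sub_Gmap (ha0 : 0 ≤ a) (ha1 : a ≤ 1) (hb0 : 0 ≤ b) (hb1 : b ≤ 1) :
    Gmap θs αs θ a - Gmap θs αs θ b =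
      (a - b) * ∫ y, mixDen θs αs y / (emDenom θ a y * emDenom θ b y) := by
  rw [Gmap_eq_integral_resp, Gmap_eq_integral_resp, ← integral_sub
    (integrable_resp_mul_mixDen ha0 ha1) (integrable_resp_mul_mixDen hb0 hb1),
    ← integral_const_mul]
  refine integral_congr_ae (ae_of_all _ fun y => ?_)
  dsimp only
  rw [← sub_mul, resp_sub_resp ha0 ha1 hb0 hb1]
  ring

lemma Fmap_sub_Fmap (ha0 : 0 ≤ a) (ha1 : a ≤ 1) (hb0 : 0 ≤ b) (hb1 : b ≤ 1) :
    Fmap θs αs θ a - Fmap θs αs θ b =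
      2 * (a - b) * ∫ y, y * (mixDen θs αs y / (emDenom θ a y * emDenom θ b y)) := by
  rw [Fmap_eq_integral_resp ha0 ha1, Fmap_eq_integral_resp hb0 hb1, ← integral_sub
    (integrable_two_mul_resp_sub_one_mul ha0 ha1) (integrable_two_mul_resp_sub_one_mul hb0 hb1),
    ← integral_const_mul]
  refine integral_congr_ae (ae_of_all _ fun y => ?_)
  dsimp only
  rw [← sub_mul, show 2 * resp θ a y - 1 - (2 * resp θ b y - 1) = 2 * (resp θ a y - resp θ b y)
    by ring, resp_sub_resp ha0 ha1 hb0 hb1]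
  ring

lemma self_sub_Gmap_self (h0 : 0 ≤ αs) (h1 : αs ≤ 1) :
    αs - Gmap θs αs θ αs = αs * (1 - αs) *
      ∫ y, (exp (-(θ * y)) - exp (θ * y)) * (mixDen θs αs y / emDenom θ αs y) := by
  have hαs : αs = ∫ y, αs * mixDen θs αs y := by
    rw [integral_const_mul, integral_mixDen, mul_one]
  rw [Gmap_eq_integral_resp]
  nth_rw 1 [hαs]
  rw [← integral_sub (integrable_mixDen.const_mul αs)
    (integrable_resp_mul_mixDen h0 h1), ← integral_const_mul]
  refine integral_congr_ae (ae_of_all _ fun y => ?_)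
  dsimp only
  rw [← sub_mul, sub_resp_self h0 h1]
  ring

end EMMaps

section Positivity

variable {θs αs θ a b : ℝ}

lemma mixDen_div_neg_lt {P : ℝ → ℝ} (hθs : 0 < θs) (hαs : 1 / 2 < αs) (hαs1 : αs ≤ 1)
    {y : ℝ} (hy : 0 < y) (hP : 0 < P y) (hPy : P y ≤ P (-y)) :
    mixDen θs αs (-y) / P (-y) < mixDen θs αs y / P y :=
  div_lt_div₀ (mixDen_neg_lt hθs hαs hy) hPy (mixDen_nonneg (by linarith) hαs1 y) hP

lemma Gmap_self_lt_self (hθs : 0 < θs) (hθ : θ < 0) (hαs : 1 / 2 < αs) (hαs1 : αs < 1) :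
    Gmap θs αs θ αs < αs := by
  have h0 : 0 ≤ αs := by linarith
  have hc : 0 < αs * (1 - αs) := mul_pos (by linarith) (by linarith)
  have hint : Integrable fun y =>
      (exp (-(θ * y)) - exp (θ * y)) * (mixDen θs αs y / emDenom θ αs y) := by
    refine ((((integrable_mixDen (θs := θs) (αs := αs)).const_mul αs).sub
      (integrable_resp_mul_mixDen (θs := θs) (αs := αs) (θ := θ) h0 hαs1.le)).div_const
      (αs * (1 - αs))).congr (ae_of_all _ fun y => ?_)
    simp only [Pi.sub_apply]
    rw [← sub_mul, sub_resp_self h0 hαs1.le]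
    have := sub_ne_zero.2 hαs1.ne'
    field_simp
  have hpos := integral_odd_mul_pos hint (fun y => by rw [mul_neg, neg_neg]; ring)
    (fun y hy => sub_pos.2 (exp_lt_exp.2 (by nlinarith)))
    (fun y hy => mixDen_div_neg_lt hθs hαs hαs1.le hy (emDenom_pos h0 hαs1.le y)
      (emDenom_lt_emDenom_neg hθ hαs hy).le)
  have := self_sub_Gmap_self (θs := θs) (θ := θ) h0 hαs1.le
  linarith [mul_pos hc hpos]

lemma integral_mixDen_div_emDenom_mul_pos (hαs0 : 0 < αs) (hαs1 : αs ≤ 1) (ha0 : 0 < a)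
    (ha1 : a ≤ 1) (hb0 : 0 ≤ b) (hb1 : b < 1) :
    0 < ∫ y, mixDen θs αs y / (emDenom θ a y * emDenom θ b y) := by
  have hpos y : 0 < mixDen θs αs y / (emDenom θ a y * emDenom θ b y) :=
    div_pos (mixDen_pos hαs0 hαs1 y) (mul_pos (emDenom_pos ha0.le ha1 y) (emDenom_pos hb0 hb1.le y))
  exact integral_pos_of_add_comp_neg_pos
    ((integrable_mixDen (θs := θs) (αs := αs)).div_emDenom_mul ha0 ha1 hb0 hb1) fun y _ =>
    add_pos (hpos y) (hpos (-y))

lemma integral_mul_mixDen_div_emDenom_mul_pos (hθs : 0 < θs) (hαs : 1 / 2 < αs)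
    (hαs1 : αs ≤ 1) (hθ : θ < 0) (ha : 1 / 2 < a) (ha1 : a ≤ 1) (hb : 1 / 2 < b) (hb1 : b < 1) :
    0 < ∫ y, y * (mixDen θs αs y / (emDenom θ a y * emDenom θ b y)) := by
  have ha0 : 0 ≤ a := by linarith
  have hb0 : 0 ≤ b := by linarith
  have hint := (integrable_id_mul_mixDen (θs := θs) (αs := αs)).div_emDenom_mul (θ := θ)
    (by linarith) ha1 hb0 hb1
  simp_rw [mul_div_assoc] at hint
  refine integral_odd_mul_pos hint (fun y => rfl) (fun y hy => hy) fun y hy =>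
    mixDen_div_neg_lt (P := fun y => emDenom θ a y * emDenom θ b y) hθs hαs hαs1 hy
      (mul_pos (emDenom_pos ha0 ha1 y) (emDenom_pos hb0 hb1.le y)) ?_
  exact mul_le_mul (emDenom_lt_emDenom_neg hθ ha hy).le (emDenom_lt_emDenom_neg hθ hb hy).le
    (emDenom_pos hb0 hb1.le y).le (emDenom_pos ha0 ha1 (-y)).le

end Positivity

/-- the derivative of the entropic OT loss strictly dominates that of
the negative log-likelihood on the negative half-line: for `θ < 0` and any tilted
weight `a ∈ (0,1)` with `G(θ, a) = α*`, one has `F(θ, a) > F(θ, α*)`. -/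
theorem F_tilted_gt_F_on_negative_halfline
    (θs αs : ℝ) (hθs : 0 < θs) (hαs : 1 / 2 < αs) (hαs1 : αs < 1) :
    ∀ θ < (0 : ℝ), ∀ a ∈ Set.Ioo (0 : ℝ) 1,
      Gmap θs αs θ a = αs → Fmap θs αs θ αs < Fmap θs αs θ a := by
  intro θ hθ a ⟨ha0, ha1⟩ hGa
  have hαs0 : 0 < αs := by linarith
  have hGdiff := Gmap_sub_Gmap (θs := θs) (αs := αs) (θ := θ) ha0.le ha1.le hαs0.le hαs1.le
  rw [hGa] at hGdiff
  have hαs_lt_a : αs < a := by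
    have hI := integral_mixDen_div_emDenom_mul_pos (θs := θs) (θ := θ) hαs0 hαs1.le ha0 ha1.le
      hαs0.le hαs1
    have hgap := Gmap_self_lt_self hθs hθ hαs hαs1
    exact sub_pos.1 ((mul_pos_iff_of_pos_right hI).1 (by linarith))
  rw [← sub_pos, Fmap_sub_Fmap ha0.le ha1.le hαs0.le hαs1.le]
  exact mul_pos (mul_pos two_pos (sub_pos.2 hαs_lt_a))
    (integral_mul_mixDen_div_emDenom_mul_pos hθs hαs hαs1.le hθ (hαs.trans hαs_lt_a) ha1.le
      hαs hαs1)
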